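/- For each i ∈ {1,2,…,m−2}, let T_{i,i+1} = min{n : A_i(n)·A_{i+1}(n) = 0}. Then E[T_{i,i+1}] = m·a_i·a_{i+1}. -/

import Mathlib

/-!
Write `X = A_i` and `Y = A_{i+1}`. A step of the walk moves `(X, Y)` by `(-1, 0)`, `(1, -1)` or
`(0, 1)`, each with probability `1/m`, and leaves it unchanged otherwise. Hence, up to time `T`,
`XY + n/m` and `XY(X + Y)` are martingales. With `t n = P(T > n)` and `p n = E[XY; T > n]` the
first gives `m p n = m p (n+1) + t n`, so `∑ t n ≤ m a_i a_{i+1}` and `t n → 0`. The second keeps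
`E[XY(X + Y); T > n]` constant, and `N XY ≤ N³ + XY(X + Y)` then gives
`p n ≤ N² t n + const / N` for every `N`, so `p n → 0` and `E T = ∑ t n = m p 0 = m a_i a_{i+1}`.
-/

open MeasureTheory ProbabilityTheory Filter
open scoped ENNReal Topology

/-- The `m` possible step vectors of the competition process on the `m - 1` gaps
(0-indexed): `step m 0 = -e₀`, `step m k = e_{k-1} - e_k` for `0 < k < m - 1`, and
`step m (m-1) = e_{m-2}`. -/
def step (m : ℕ) (k : Fin m) : Fin (m - 1) → ℤ := fun j =>
  (if (j : ℕ) + 1 = (k : ℕ) then 1 else 0) - (if (j : ℕ) = (k : ℕ) then 1 else 0)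

section Independence

variable {Ω V : Type*} {mΩ : MeasurableSpace Ω} {μ : Measure Ω} [MeasurableSpace V]
  [MeasurableSingletonClass V]

theorem lintegral_comp_eq_sum_of_indep {m₁ m₂ : MeasurableSpace Ω} (h₁ : m₁ ≤ mΩ)
    (h₂ : m₂ ≤ mΩ) (hind : Indep m₁ m₂ μ) {X : Ω → V} (hX : Measurable[m₁] X) {S : Finset V}
    (hXS : ∀ᵐ ω ∂μ, X ω ∈ S) {F : V → Ω → ℝ≥0∞} (hF : ∀ v, Measurable[m₂] (F v)) :
    ∫⁻ ω, F (X ω) ω ∂μ = ∑ v ∈ S, μ {ω | X ω = v} * ∫⁻ ω, F v ω ∂μ := by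
  have hlevel : ∀ v, MeasurableSet[m₁] {ω | X ω = v} := fun v => hX (measurableSet_singleton v)
  have hindicator : ∀ v, Measurable[m₁] ({ω | X ω = v}.indicator (1 : Ω → ℝ≥0∞)) :=
    fun v => (@measurable_const _ _ _ m₁ 1).indicator (hlevel v)
  calc ∫⁻ ω, F (X ω) ω ∂μ
      = ∫⁻ ω, ∑ v ∈ S, {ω | X ω = v}.indicator 1 ω * F v ω ∂μ := by
        refine lintegral_congr_ae (hXS.mono fun ω hω => ?_)
        dsimp only
        rw [Finset.sum_eq_single_of_mem _ hω fun v _ hv => by simp [Ne.symm hv]]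
        simp
    _ = ∑ v ∈ S, ∫⁻ ω, {ω | X ω = v}.indicator 1 ω * F v ω ∂μ :=
        lintegral_finsetSum' _ fun v _ =>
          (((hindicator v).mono h₁ le_rfl).mul ((hF v).mono h₂ le_rfl)).aemeasurable
    _ = _ := Finset.sum_congr rfl fun v _ => by
        rw [lintegral_mul_eq_lintegral_mul_lintegral_of_independent_measurableSpace h₁ h₂ hind
          (hindicator v) (hF v), lintegral_indicator_one (h₁ _ (hlevel v))]

theorem ae_mem_of_sum_measure_eq_one [IsProbabilityMeasure μ] {X : Ω → V} (hX : Measurable X)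
    {S : Finset V} (hS : ∑ v ∈ S, μ {ω | X ω = v} = 1) : ∀ᵐ ω ∂μ, X ω ∈ S := by
  have hmem : μ (X ⁻¹' S) = 1 := by
    rw [← sum_measure_preimage_singleton S fun v _ => hX (measurableSet_singleton v)]
    exact hS
  exact (prob_compl_eq_zero_iff (hX S.measurableSet)).2 hmem

end Independence

section Walk

variable {Ω V : Type*} {mΩ : MeasurableSpace Ω} [MeasurableSpace V]

abbrev pastIncrements (ξ : ℕ → Ω → V) (n : ℕ) : MeasurableSpace Ω :=
  ⨆ l ∈ Set.Iio n, MeasurableSpace.comap (ξ l) ‹_›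

theorem pastIncrements_mono (ξ : ℕ → Ω → V) : Monotone (pastIncrements ξ) :=
  fun _ _ hnk => biSup_mono fun _ hl => lt_of_lt_of_le hl hnk

theorem pastIncrements_le {ξ : ℕ → Ω → V} (hξ : ∀ n, Measurable (ξ n)) (n : ℕ) :
    pastIncrements ξ n ≤ mΩ :=
  iSup₂_le fun l _ => (hξ l).comap_le

theorem measurable_pastIncrements_succ (ξ : ℕ → Ω → V) (n : ℕ) :
    Measurable[pastIncrements ξ (n + 1)] (ξ n) := by
  have h : MeasurableSpace.comap (ξ n) ‹_› ≤ pastIncrements ξ (n + 1) :=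
    le_iSup₂ (f := fun l (_ : l ∈ Set.Iio (n + 1)) => MeasurableSpace.comap (ξ l) ‹_›) n
      n.lt_succ_self
  exact Measurable.mono (comap_measurable (ξ n)) h le_rfl

theorem indep_comap_pastIncrements {μ : Measure Ω} {ξ : ℕ → Ω → V} (hξ : ∀ n, Measurable (ξ n))
    (hind : iIndepFun ξ μ) (n : ℕ) :
    Indep (MeasurableSpace.comap (ξ n) ‹_›) (pastIncrements ξ n) μ := by
  have h := indep_iSup_of_disjoint (fun l => (hξ l).comap_le)
    ((iIndepFun_iff_iIndep _ ξ μ).1 hind) (S := {n}) (T := Set.Iio n) (by simp)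
  rwa [iSup_singleton] at h

theorem measurable_pastIncrements_of_succ [Add V] [Countable V] [MeasurableSingletonClass V]
    {ξ A : ℕ → Ω → V} {x₀ : V} (hA0 : ∀ ω, A 0 ω = x₀) (hA : ∀ n ω, A (n + 1) ω = A n ω + ξ n ω)
    (n : ℕ) : Measurable[pastIncrements ξ n] (A n) := by
  induction n with
  | zero => simpa only [funext hA0] using measurable_const
  | succ n ih =>
    rw [funext (hA n)]
    exact (measurable_of_countable fun p : V × V => p.1 + p.2).comp
      ((ih.mono (pastIncrements_mono ξ n.le_succ) le_rfl).prodMk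
        (measurable_pastIncrements_succ ξ n))

end Walk

namespace ENNReal

theorem tendsto_zero_of_forall_nat_mul_le {p t : ℕ → ℝ≥0∞} {C : ℝ≥0∞} (hC : C ≠ ∞)
    (ht : Tendsto t atTop (𝓝 0)) (hbound : ∀ N : ℕ, ∃ K ≠ ∞, ∀ n, N * p n ≤ K * t n + C) :
    Tendsto p atTop (𝓝 0) := by
  refine ENNReal.tendsto_nhds_zero.2 fun ε hε => ?_
  obtain ⟨N, hN⟩ := ENNReal.exists_nat_mul_gt (ENNReal.half_pos hε.ne').ne' hC
  have hN₀ : (N : ℝ≥0∞) ≠ 0 := by rintro h; simp [h] at hN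
  obtain ⟨K, hK, hpK⟩ := hbound N
  have hKt : Tendsto (fun n => K * t n) atTop (𝓝 0) := by
    simpa using ENNReal.Tendsto.const_mul ht (Or.inr hK)
  filter_upwards [ENNReal.tendsto_nhds_zero.1 hKt _ (pos_of_gt hN)] with n hn
  refine (ENNReal.mul_le_mul_iff_right hN₀ (ENNReal.natCast_ne_top N)).1 ?_
  calc (N : ℝ≥0∞) * p n ≤ N * (ε / 2) + N * (ε / 2) := (hpK n).trans (add_le_add hn hN.le)
    _ = N * ε := by rw [← mul_add, ENNReal.add_halves]

theorem tsum_eq_mul_of_mul_eq_add {p t : ℕ → ℝ≥0∞} {c C : ℝ≥0∞} (hc : c ≠ ∞) (hp₀ : p 0 ≠ ∞)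
    (hC : C ≠ ∞) (hrec : ∀ n, c * p n = c * p (n + 1) + t n)
    (hbound : ∀ N : ℕ, ∃ K ≠ ∞, ∀ n, N * p n ≤ K * t n + C) :
    ∑' n, t n = c * p 0 := by
  have hpartial : ∀ n, c * p 0 = c * p n + ∑ k ∈ Finset.range n, t k := by
    intro n
    induction n with
    | zero => simp
    | succ n ih => rw [ih, hrec n, Finset.sum_range_succ, add_assoc, add_comm (t n)]
  have hsum : ∑' n, t n ≠ ∞ := ne_top_of_le_ne_top (mul_ne_top hc hp₀)
    (ENNReal.tsum_le_of_sum_range_le fun n => (hpartial n).symm ▸ le_add_self)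
  have hp := tendsto_zero_of_forall_nat_mul_le hC
    (ENNReal.tendsto_atTop_zero_of_tsum_ne_top hsum) hbound
  have hlim : Tendsto (fun n => c * p n + ∑ k ∈ Finset.range n, t k) atTop
      (𝓝 (c * 0 + ∑' n, t n)) :=
    (ENNReal.Tendsto.const_mul hp (Or.inr hc)).add (ENNReal.tendsto_nat_tsum t)
  rw [← funext hpartial, mul_zero, zero_add] at hlim
  exact tendsto_nhds_unique hlim tendsto_const_nhds

end ENNReal

theorem lintegral_natCast_eq_tsum_measure_lt {Ω : Type*} [MeasurableSpace Ω] {μ : Measure Ω}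
    {T : Ω → ℕ} (hT : ∀ n, MeasurableSet {ω | n < T ω}) :
    ∫⁻ ω, (T ω : ℝ≥0∞) ∂μ = ∑' n, μ {ω | n < T ω} := by
  have hpt : ∀ ω, (T ω : ℝ≥0∞) = ∑' n, {ω | n < T ω}.indicator 1 ω := by
    intro ω
    rw [tsum_eq_sum (s := Finset.range (T ω)) fun n hn =>
      Set.indicator_of_notMem (by simpa using hn) _]
    rw [Finset.sum_congr rfl fun n hn =>
      Set.indicator_of_mem (s := {ω | n < T ω}) (Finset.mem_range.1 hn) (1 : Ω → ℝ≥0∞)]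
    simp
  simp_rw [hpt]
  rw [lintegral_tsum fun n => (measurable_one.indicator (hT n)).aemeasurable]
  simp_rw [lintegral_indicator_one (hT _)]

theorem Int.pos_of_forall_ne_zero_of_abs_sub_le_one {u : ℕ → ℤ} (h₀ : 0 ≤ u 0)
    (hstep : ∀ k, |u (k + 1) - u k| ≤ 1) {n : ℕ} (hne : ∀ k ≤ n, u k ≠ 0) : 0 < u n := by
  induction n with
  | zero => exact lt_of_le_of_ne h₀ (hne 0 le_rfl).symm
  | succ n ih =>
    have := ih fun k hk => hne k (hk.trans n.le_succ)
    have := abs_le.1 (hstep n)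
    have := hne (n + 1) le_rfl
    omega

section Step

variable {m : ℕ}

theorem abs_step_le_one (k : Fin m) (j : Fin (m - 1)) : |step m k j| ≤ 1 := by
  unfold step; split_ifs <;> norm_num

theorem step_injective : Function.Injective (step m) := by
  have key : ∀ k k' : Fin m, k < k' → step m k ≠ step m k' := by
    intro k k' hlt h
    have := congrFun h ⟨k, by omega⟩
    simp only [step] at this
    split_ifs at this <;> omega
  intro k k' h
  rcases lt_trichotomy k k' with hlt | heq | hgt
  · exact absurd h (key k k' hlt)
  · exact heq
  · exact absurd h.symm (key k' k hgt)

-- Only the steps `i`, `i + 1`, `i + 2` move the pair `(x i, x j)`; the other `m - 3` fix it.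
-- The `3 •` on the left keeps the truncated subtraction `m - 3` out of the statement.
theorem sum_step_apply_add_three_smul {R : Type*} [AddCommMonoid R] {i j : Fin (m - 1)}
    (hij : (j : ℕ) = i + 1) (f : ℤ → ℤ → R) (x : Fin (m - 1) → ℤ) :
    ∑ k, f ((x + step m k) i) ((x + step m k) j) + 3 • f (x i) (x j)
      = f (x i - 1) (x j) + f (x i + 1) (x j - 1) + f (x i) (x j + 1) + m • f (x i) (x j) := by
  have hj := j.2
  set k₁ : Fin m := ⟨i, by omega⟩
  set k₂ : Fin m := ⟨i + 1, by omega⟩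
  set k₃ : Fin m := ⟨i + 2, by omega⟩
  have hT : ({k₁, k₂, k₃} : Finset (Fin m)).card = 3 := by
    rw [Finset.card_insert_of_notMem, Finset.card_pair] <;> simp [k₁, k₂, k₃, Fin.ext_iff]
  have hcompl : ∀ k ∈ ({k₁, k₂, k₃} : Finset (Fin m))ᶜ,
      f ((x + step m k) i) ((x + step m k) j) = f (x i) (x j) := by
    intro k hk
    simp only [Finset.mem_compl, Finset.mem_insert, Finset.mem_singleton, Fin.ext_iff,
      k₁, k₂, k₃] at hk
    simp only [Pi.add_apply, step]
    congr 2 <;> split_ifs <;> omega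
  rw [← Finset.sum_add_sum_compl {k₁, k₂, k₃}, Finset.sum_congr rfl hcompl, Finset.sum_const,
    Finset.card_compl, Fintype.card_fin, hT, Finset.sum_insert (by simp [k₁, k₂, k₃, Fin.ext_iff]),
    Finset.sum_pair (by simp [k₂, k₃, Fin.ext_iff])]
  have e₁ : (x + step m k₁) i = x i - 1 ∧ (x + step m k₁) j = x j := by
    simp only [Pi.add_apply, step, k₁]; constructor <;> split_ifs <;> omega
  have e₂ : (x + step m k₂) i = x i + 1 ∧ (x + step m k₂) j = x j - 1 := by
    simp only [Pi.add_apply, step, k₂]; constructor <;> split_ifs <;> omega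
  have e₃ : (x + step m k₃) i = x i ∧ (x + step m k₃) j = x j + 1 := by
    simp only [Pi.add_apply, step, k₃]; constructor <;> split_ifs <;> omega
  rw [e₁.1, e₁.2, e₂.1, e₂.2, e₃.1, e₃.2, add_assoc _ (_ • _), ← add_smul,
    Nat.sub_add_cancel (by omega)]
  abel

theorem toNat_mul_sum_moves {X Y : ℤ} (hX : 1 ≤ X) (hY : 1 ≤ Y) :
    (X - 1).toNat * Y.toNat + (X + 1).toNat * (Y - 1).toNat + X.toNat * (Y + 1).toNat + 1
      = 3 * (X.toNat * Y.toNat) := by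
  zify
  simp (disch := omega) only [Int.toNat_of_nonneg]
  ring

theorem toNat_mul_add_sum_moves {X Y : ℤ} (hX : 1 ≤ X) (hY : 1 ≤ Y) :
    (X - 1).toNat * Y.toNat * ((X - 1).toNat + Y.toNat)
      + (X + 1).toNat * (Y - 1).toNat * ((X + 1).toNat + (Y - 1).toNat)
      + X.toNat * (Y + 1).toNat * (X.toNat + (Y + 1).toNat)
      = 3 * (X.toNat * Y.toNat * (X.toNat + Y.toNat)) := by
  zify
  simp (disch := omega) only [Int.toNat_of_nonneg]
  ring

end Step

section Survival

variable {Ω ι : Type*}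

def survival (A : ℕ → Ω → ι → ℤ) (i j : ι) (n : ℕ) : Set Ω :=
  {ω | ∀ k ≤ n, A k ω i * A k ω j ≠ 0}

theorem Nat.lt_sInf_iff_nonempty {s : Set ℕ} {n : ℕ} :
    n < sInf s ↔ s.Nonempty ∧ ∀ k ≤ n, k ∉ s := by
  constructor
  · intro h
    exact ⟨Nat.nonempty_of_pos_sInf (n.zero_le.trans_lt h),
      fun k hk => Nat.notMem_of_lt_sInf (hk.trans_lt h)⟩
  · rintro ⟨hs, hn⟩
    by_contra! h
    exact hn _ h (Nat.sInf_mem hs)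

theorem setOf_lt_sInf_eq_survival_diff (A : ℕ → Ω → ι → ℤ) (i j : ι) (n : ℕ) :
    {ω | n < sInf {k | A k ω i * A k ω j = 0}} = survival A i j n \ ⋂ N, survival A i j N := by
  ext ω
  simp only [Set.mem_ofPred_eq, Nat.lt_sInf_iff_nonempty, Set.mem_sdiff, Set.mem_iInter, survival]
  constructor
  · rintro ⟨⟨k, hk⟩, hsurv⟩
    exact ⟨hsurv, fun hall => hall k k le_rfl hk⟩
  · rintro ⟨hsurv, hhit⟩
    push Not at hhit
    obtain ⟨-, k, -, hk⟩ := hhit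
    exact ⟨⟨k, hk⟩, hsurv⟩

end Survival

section Potentials

variable {ι : Type*}

-- The potentials `XY` and `XY(X + Y)` of the gaps `X = x i`, `Y = x j`, truncated to `ℕ` so that
-- their expectations are `lintegral`s without integrability conditions; the truncation is
-- invisible on the survival event, where both gaps are positive.
def gapProd (i j : ι) (x : ι → ℤ) : ℕ := (x i).toNat * (x j).toNat

def gapProdSum (i j : ι) (x : ι → ℤ) : ℕ := gapProd i j x * ((x i).toNat + (x j).toNat)

theorem gapProd_eq_zero {i j : ι} {x : ι → ℤ} (h : x i * x j = 0) : gapProd i j x = 0 := by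
  rcases mul_eq_zero.1 h with h | h <;> simp [gapProd, h]

theorem gapProdSum_eq_zero {i j : ι} {x : ι → ℤ} (h : x i * x j = 0) : gapProdSum i j x = 0 := by
  simp [gapProdSum, gapProd_eq_zero h]

theorem nat_mul_gapProd_le (i j : ι) (N : ℕ) (x : ι → ℤ) :
    N * gapProd i j x ≤ N ^ 3 + gapProdSum i j x := by
  set X := (x i).toNat
  set Y := (x j).toNat
  change N * (X * Y) ≤ N ^ 3 + X * Y * (X + Y)
  rcases le_or_gt (X * Y) (N ^ 2) with h | h
  · calc N * (X * Y) ≤ N * N ^ 2 := Nat.mul_le_mul_left N h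
      _ = N ^ 3 := by ring
      _ ≤ _ := Nat.le_add_right _ _
  · have : N ≤ X + Y := by nlinarith
    nlinarith

variable {Ω : Type*} [MeasurableSpace Ω]

theorem nat_mul_setLIntegral_gapProd_le (μ : Measure Ω) (A : ℕ → Ω → ι → ℤ) (i j : ι)
    (N n : ℕ) :
    N * ∫⁻ ω in survival A i j n, (gapProd i j (A n ω) : ℝ≥0∞) ∂μ
      ≤ N ^ 3 * μ (survival A i j n)
        + ∫⁻ ω in survival A i j n, (gapProdSum i j (A n ω) : ℝ≥0∞) ∂μ := by
  rw [← lintegral_const_mul' _ _ (ENNReal.natCast_ne_top N), ← setLIntegral_const,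
    ← lintegral_add_left measurable_const]
  refine lintegral_mono fun ω => ?_
  have h := Nat.cast_le (α := ℝ≥0∞) |>.2 (nat_mul_gapProd_le i j N (A n ω))
  push_cast at h
  exact h

end Potentials

section Harmonic

variable {m : ℕ} {i j : Fin (m - 1)}

theorem sum_gapProd_step_add_one (hij : (j : ℕ) = i + 1) {x : Fin (m - 1) → ℤ} (hi : 0 < x i)
    (hj : 0 < x j) : ∑ k, gapProd i j (x + step m k) + 1 = m * gapProd i j x := by
  have hsum := sum_step_apply_add_three_smul hij (fun X Y => X.toNat * Y.toNat) x
  have hharm := toNat_mul_sum_moves (X := x i) (Y := x j) hi hj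
  simp only [smul_eq_mul] at hsum
  unfold gapProd
  omega

theorem sum_gapProdSum_step (hij : (j : ℕ) = i + 1) {x : Fin (m - 1) → ℤ} (hi : 0 < x i)
    (hj : 0 < x j) : ∑ k, gapProdSum i j (x + step m k) = m * gapProdSum i j x := by
  have hsum := sum_step_apply_add_three_smul hij
    (fun X Y => X.toNat * Y.toNat * (X.toNat + Y.toNat)) x
  have hharm := toNat_mul_add_sum_moves (X := x i) (Y := x j) hi hj
  simp only [smul_eq_mul] at hsum
  unfold gapProdSum gapProd
  omega

end Harmonic

structure IsCompetitionWalk {Ω : Type*} [MeasurableSpace Ω] (μ : Measure Ω) (m : ℕ)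
    (a : Fin (m - 1) → ℕ) (ξ A : ℕ → Ω → Fin (m - 1) → ℤ) : Prop where
  measurable : ∀ n, Measurable (ξ n)
  indep : iIndepFun ξ μ
  uniform : ∀ n (k : Fin m), μ {ω | ξ n ω = step m k} = 1 / m
  init : ∀ ω j, A 0 ω j = a j
  succ : ∀ n ω, A (n + 1) ω = A n ω + ξ n ω

namespace IsCompetitionWalk

variable {Ω : Type*} [MeasurableSpace Ω] {μ : Measure Ω} {m : ℕ} {a : Fin (m - 1) → ℕ}
  {ξ A : ℕ → Ω → Fin (m - 1) → ℤ}

theorem measurable_pastIncrements (hW : IsCompetitionWalk μ m a ξ A) (n : ℕ) :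
    Measurable[pastIncrements ξ n] (A n) :=
  measurable_pastIncrements_of_succ (fun ω => funext (hW.init ω)) hW.succ n

theorem measurableSet_pastIncrements_survival (hW : IsCompetitionWalk μ m a ξ A)
    (i j : Fin (m - 1)) (n : ℕ) :
    MeasurableSet[pastIncrements ξ n] (survival A i j n) := by
  simp only [survival, Set.ofPred_forall]
  exact MeasurableSet.iInter fun k => MeasurableSet.iInter fun hk =>
    ((hW.measurable_pastIncrements k).mono (pastIncrements_mono ξ hk) le_rfl)
      (Set.to_countable {x : Fin (m - 1) → ℤ | x i * x j ≠ 0}).measurableSet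

theorem measurableSet_survival (hW : IsCompetitionWalk μ m a ξ A) (i j : Fin (m - 1))
    (n : ℕ) :
    MeasurableSet (survival A i j n) :=
  pastIncrements_le hW.measurable n _ (hW.measurableSet_pastIncrements_survival i j n)

theorem setLIntegral_survival_succ {i j : Fin (m - 1)} (hW : IsCompetitionWalk μ m a ξ A)
    (n : ℕ) {φ : (Fin (m - 1) → ℤ) → ℝ≥0∞} (hφ : ∀ x, x i * x j = 0 → φ x = 0) :
    ∫⁻ ω in survival A i j (n + 1), φ (A (n + 1) ω) ∂μ
      = ∫⁻ ω in survival A i j n, φ (A (n + 1) ω) ∂μ := by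
  rw [← lintegral_indicator (hW.measurableSet_survival i j _),
    ← lintegral_indicator (hW.measurableSet_survival i j _)]
  refine lintegral_congr fun ω => ?_
  by_cases hsucc : ω ∈ survival A i j (n + 1)
  · have hn : ω ∈ survival A i j n := fun k hk => hsucc k (hk.trans n.le_succ)
    simp [hsucc, hn]
  by_cases hn : ω ∈ survival A i j n
  · have hzero : A (n + 1) ω i * A (n + 1) ω j = 0 := by
      by_contra hz
      exact hsucc fun k hk => (Nat.le_succ_iff.1 hk).elim (hn k) fun e => e ▸ hz
    simp [hsucc, hn, hφ _ hzero]
  · simp [hsucc, hn]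

variable [IsProbabilityMeasure μ]

theorem ae_exists_step (hW : IsCompetitionWalk μ m a ξ A) (hm : m ≠ 0) :
    ∀ᵐ ω ∂μ, ∀ n, ξ n ω ∈ Set.range (step m) := by
  refine ae_all_iff.2 fun n => ?_
  have hsum : ∑ v ∈ Finset.univ.image (step m), μ {ω | ξ n ω = v} = 1 := by
    rw [Finset.sum_image fun k _ k' _ h => step_injective h]
    simp [hW.uniform n, ENNReal.mul_inv_cancel (Nat.cast_ne_zero.2 hm) (ENNReal.natCast_ne_top m)]
  filter_upwards [ae_mem_of_sum_measure_eq_one (hW.measurable n) hsum] with ω hω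
  simpa using hω

theorem ae_pos_of_mem_survival (hW : IsCompetitionWalk μ m a ξ A) (hm : m ≠ 0)
    (i j : Fin (m - 1)) :
    ∀ᵐ ω ∂μ, ∀ n, ω ∈ survival A i j n → 0 < A n ω i ∧ 0 < A n ω j := by
  filter_upwards [hW.ae_exists_step hm] with ω hω n hn
  have hpos : ∀ l, (∀ k ≤ n, A k ω l ≠ 0) → 0 < A n ω l := fun l hne =>
    Int.pos_of_forall_ne_zero_of_abs_sub_le_one (by simp [hW.init]) (fun k => by
      obtain ⟨s, hs⟩ := hω k
      simpa [hW.succ, hs] using abs_step_le_one s l) hne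
  exact ⟨hpos i fun k hk => left_ne_zero_of_mul (hn k hk),
    hpos j fun k hk => right_ne_zero_of_mul (hn k hk)⟩

theorem mul_setLIntegral_survival_succ (hW : IsCompetitionWalk μ m a ξ A) (hm : m ≠ 0)
    (i j : Fin (m - 1)) (n : ℕ) (φ : (Fin (m - 1) → ℤ) → ℝ≥0∞) :
    m * ∫⁻ ω in survival A i j n, φ (A (n + 1) ω) ∂μ
      = ∫⁻ ω in survival A i j n, ∑ k, φ (A n ω + step m k) ∂μ := by
  set G := survival A i j n
  have hG := hW.measurableSet_survival i j n
  have hF : ∀ v, Measurable[pastIncrements ξ n] (G.indicator fun ω => φ (A n ω + v)) := fun v =>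
    ((measurable_of_countable fun x => φ (x + v)).comp (hW.measurable_pastIncrements n)).indicator
      (hW.measurableSet_pastIncrements_survival i j n)
  have hstep := lintegral_comp_eq_sum_of_indep (hW.measurable n).comap_le
    (pastIncrements_le hW.measurable n) (indep_comap_pastIncrements hW.measurable hW.indep n)
    (comap_measurable (ξ n)) (S := Finset.univ.image (step m))
    ((hW.ae_exists_step hm).mono fun ω hω => by simpa using hω n) hF
  have hmeas : ∀ k, Measurable fun ω => φ (A n ω + step m k) := fun k =>
    (measurable_of_countable fun x => φ (x + step m k)).comp
      ((hW.measurable_pastIncrements n).mono (pastIncrements_le hW.measurable n) le_rfl)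
  calc (m : ℝ≥0∞) * ∫⁻ ω in G, φ (A (n + 1) ω) ∂μ
      = m * ∫⁻ ω, G.indicator (fun ω' => φ (A n ω' + ξ n ω)) ω ∂μ := by
        rw [← lintegral_indicator hG]
        congr 1
        refine lintegral_congr fun ω => ?_
        by_cases hω : ω ∈ G <;> simp [hω, G, hW.succ]
    _ = m * ∑ k, 1 / m * ∫⁻ ω in G, φ (A n ω + step m k) ∂μ := by
        rw [hstep, Finset.sum_image fun k _ k' _ h => step_injective h]
        refine congrArg _ (Finset.sum_congr rfl fun k _ => ?_)
        rw [hW.uniform, lintegral_indicator hG]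
    _ = ∫⁻ ω in G, ∑ k, φ (A n ω + step m k) ∂μ := by
        rw [← Finset.mul_sum, ← mul_assoc, ENNReal.mul_div_cancel (Nat.cast_ne_zero.2 hm)
          (ENNReal.natCast_ne_top m), one_mul, lintegral_finsetSum _ fun k _ => hmeas k]

theorem setLIntegral_survival_zero (hW : IsCompetitionWalk μ m a ξ A) (i j : Fin (m - 1))
    {φ : (Fin (m - 1) → ℤ) → ℝ≥0∞} (hφ : ∀ x, x i * x j = 0 → φ x = 0) :
    ∫⁻ ω in survival A i j 0, φ (A 0 ω) ∂μ = φ fun l => (a l : ℤ) := by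
  have hA0 : ∀ ω, A 0 ω = fun l => (a l : ℤ) := fun ω => funext (hW.init ω)
  have hsupport : Function.support (fun ω => φ (A 0 ω)) ⊆ survival A i j 0 := by
    intro ω hω k hk
    rw [Nat.le_zero.1 hk]
    exact fun hz => hω (hφ _ hz)
  rw [setLIntegral_eq_of_support_subset hsupport]
  simp [hA0]

theorem mul_setLIntegral_gapProd {i j : Fin (m - 1)} (hW : IsCompetitionWalk μ m a ξ A)
    (hm : m ≠ 0) (hij : (j : ℕ) = i + 1) (n : ℕ) :
    m * ∫⁻ ω in survival A i j n, (gapProd i j (A n ω) : ℝ≥0∞) ∂μ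
      = m * ∫⁻ ω in survival A i j (n + 1), (gapProd i j (A (n + 1) ω) : ℝ≥0∞) ∂μ
        + μ (survival A i j n) := by
  rw [hW.setLIntegral_survival_succ n (φ := fun x => (gapProd i j x : ℝ≥0∞))
      fun x hx => by simp [gapProd_eq_zero hx],
    hW.mul_setLIntegral_survival_succ hm i j n fun x => (gapProd i j x : ℝ≥0∞),
    ← setLIntegral_one, ← lintegral_add_right _ measurable_const,
    ← lintegral_const_mul' _ _ (ENNReal.natCast_ne_top m)]
  refine setLIntegral_congr_fun_ae (hW.measurableSet_survival i j n)
    ((hW.ae_pos_of_mem_survival hm i j).mono fun ω hω hmem => ?_)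
  obtain ⟨hi, hj⟩ := hω n hmem
  have h := congrArg (Nat.cast (R := ℝ≥0∞)) (sum_gapProd_step_add_one hij hi hj)
  push_cast at h
  exact h.symm

theorem setLIntegral_gapProdSum_succ {i j : Fin (m - 1)} (hW : IsCompetitionWalk μ m a ξ A)
    (hm : m ≠ 0) (hij : (j : ℕ) = i + 1) (n : ℕ) :
    ∫⁻ ω in survival A i j (n + 1), (gapProdSum i j (A (n + 1) ω) : ℝ≥0∞) ∂μ
      = ∫⁻ ω in survival A i j n, (gapProdSum i j (A n ω) : ℝ≥0∞) ∂μ := by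
  refine (ENNReal.mul_right_inj (Nat.cast_ne_zero.2 hm) (ENNReal.natCast_ne_top m)).1 ?_
  rw [hW.setLIntegral_survival_succ n (φ := fun x => (gapProdSum i j x : ℝ≥0∞))
      fun x hx => by simp [gapProdSum_eq_zero hx],
    hW.mul_setLIntegral_survival_succ hm i j n fun x => (gapProdSum i j x : ℝ≥0∞),
    ← lintegral_const_mul' _ _ (ENNReal.natCast_ne_top m)]
  refine setLIntegral_congr_fun_ae (hW.measurableSet_survival i j n)
    ((hW.ae_pos_of_mem_survival hm i j).mono fun ω hω hmem => ?_)
  obtain ⟨hi, hj⟩ := hω n hmem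
  exact_mod_cast sum_gapProdSum_step hij hi hj

theorem tsum_measure_survival {i j : Fin (m - 1)} (hW : IsCompetitionWalk μ m a ξ A)
    (hm : m ≠ 0) (hij : (j : ℕ) = i + 1) : ∑' n, μ (survival A i j n) = m * (a i * a j) := by
  have hgapProd₀ := hW.setLIntegral_survival_zero i j (φ := fun x => (gapProd i j x : ℝ≥0∞))
    fun x hx => by simp [gapProd_eq_zero hx]
  have hgapProdSum₀ := hW.setLIntegral_survival_zero i j
    (φ := fun x => (gapProdSum i j x : ℝ≥0∞)) fun x hx => by simp [gapProdSum_eq_zero hx]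
  have hgapProdSum : ∀ n, ∫⁻ ω in survival A i j n, (gapProdSum i j (A n ω) : ℝ≥0∞) ∂μ
      = gapProdSum i j fun l => (a l : ℤ) := fun n => by
    induction n with
    | zero => exact hgapProdSum₀
    | succ n ih => rw [hW.setLIntegral_gapProdSum_succ hm hij n, ih]
  have hgapProd_init : gapProd i j (fun l => (a l : ℤ)) = a i * a j := by simp [gapProd]
  rw [ENNReal.tsum_eq_mul_of_mul_eq_add (ENNReal.natCast_ne_top m) (by simp [hgapProd₀])
    (ENNReal.natCast_ne_top _) (hW.mul_setLIntegral_gapProd hm hij) fun N =>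
      ⟨N ^ 3, by simp, fun n => (nat_mul_setLIntegral_gapProd_le μ A i j N n).trans_eq
        (by rw [hgapProdSum n])⟩, hgapProd₀, hgapProd_init]
  norm_cast

end IsCompetitionWalk

theorem stmt_13_general (m : ℕ)
{Ω : Type*} [MeasurableSpace Ω] (μ : Measure Ω) [IsProbabilityMeasure μ]
    (a : Fin (m - 1) → ℕ)
    (ξ : ℕ → Ω → (Fin (m - 1) → ℤ))
    (hmeas : ∀ n, Measurable (ξ n))
    (hindep : iIndepFun ξ μ)
    (hunif : ∀ n (k : Fin m), μ {ω | ξ n ω = step m k} = 1 / m)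
    (A : ℕ → Ω → (Fin (m - 1) → ℤ))
    (hA0 : ∀ ω j, A 0 ω j = (a j : ℤ))
    (hA : ∀ n ω, A (n + 1) ω = A n ω + ξ n ω)
    (i j : Fin (m - 1)) (hij : (j : ℕ) = (i : ℕ) + 1)
    (T : Ω → ℕ)
    (hT : ∀ ω, T ω = sInf {n | A n ω i * A n ω j = 0}) :
    ∫⁻ ω, (T ω : ℝ≥0∞) ∂μ = ((m * a i * a j : ℕ) : ℝ≥0∞) := by
  have hW : IsCompetitionWalk μ m a ξ A := ⟨hmeas, hindep, hunif, hA0, hA⟩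
  have hm : m ≠ 0 := by have := j.2; omega
  have hsum := hW.tsum_measure_survival hm hij
  have hnull : μ (⋂ N, survival A i j N) = 0 :=
    measure_mono_null (fun ω hω => (Eventually.of_forall (Set.mem_iInter.1 hω)).frequently)
      (measure_setOfPred_frequently_eq_zero (by simp only [Set.ofPred_mem_eq, hsum]; finiteness))
  have hlt : ∀ n, {ω | n < T ω} = survival A i j n \ ⋂ N, survival A i j N := fun n => by
    simp only [hT]
    exact setOf_lt_sInf_eq_survival_diff A i j n
  rw [lintegral_natCast_eq_tsum_measure_lt fun n => hlt n ▸ (hW.measurableSet_survival i j n).diff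
    (MeasurableSet.iInter fun N => hW.measurableSet_survival i j N)]
  simp_rw [hlt, measure_sdiff_null hnull, hsum]
  push_cast
  ring

/-- For each adjacent pair `i, j = i + 1`, the expected value of the
stopping time `T_{i,i+1} = min {n : A_i n * A_{i+1} n = 0}` equals `m * a_i * a_{i+1}`. -/
theorem stmt_13 (m : ℕ) (hm : 3 ≤ m)
{Ω : Type*} [MeasurableSpace Ω] (μ : Measure Ω) [IsProbabilityMeasure μ]
    (a : Fin (m - 1) → ℕ) (ha : ∀ k, 0 < a k)
    (ξ : ℕ → Ω → (Fin (m - 1) → ℤ))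
    (hmeas : ∀ n, Measurable (ξ n))
    (hindep : iIndepFun ξ μ)
    (hunif : ∀ n (k : Fin m), μ {ω | ξ n ω = step m k} = 1 / m)
    (A : ℕ → Ω → (Fin (m - 1) → ℤ))
    (hA0 : ∀ ω j, A 0 ω j = (a j : ℤ))
    (hA : ∀ n ω, A (n + 1) ω = A n ω + ξ n ω)
    (i j : Fin (m - 1)) (hij : (j : ℕ) = (i : ℕ) + 1)
    (T : Ω → ℕ)
    (hT : ∀ ω, T ω = sInf {n | A n ω i * A n ω j = 0}) :
    ∫⁻ ω, (T ω : ℝ≥0∞) ∂μ = ((m * a i * a j : ℕ) : ℝ≥0∞) :=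
  stmt_13_general m μ a ξ hmeas hindep hunif A hA0 hA i j hij T hT
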